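/- arXiv:math/9709215 — 7 statements merged into one kernel-verified Lean document; each statement's English description precedes it below -/
import Mathlib

section
/- For all complex numbers z, w and all p in (1,∞), the Burkholder function satisfies Φ_p(z,w) ≤ (p*−1)^p |z|^p − |w|^p, where p* = max(p, p/(p−1)), Φ_p(z,w) = α_p((p*−1)|z| − |w|)(|z|+|w|)^{p−1}, and α_p = p(1 − 1/p*)^{p−1}. -/
/-!
Write `a = ‖z‖`, `b = ‖w‖` and `G(a, b) = (p-1)^p a^p - b^p - α ((p-1) a - b) (a+b)^(p-1)` with
`α = p (1 - 1/p)^(p-1)`. For `p ≥ 2` the claim is `G ≥ 0`; for `p ≤ 2` exchanging `a` and `b` and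
multiplying by `(p-1)^p` turns the claim into `G ≤ 0`. Since `G` is `p`-homogeneous it suffices to
look at `b = 1 - a`. There `G` vanishes at `t = 1/p` and has derivative `p (ψ t - ψ (1/p))`, where
`ψ t = (p-1)^p t^(p-1) + (1-t)^(p-1)` is convex for `p ≥ 2` and concave for `p ≤ 2`. Comparing
`ψ 0 = 1` with `ψ (1/p) = α` (an elementary logarithmic inequality) shows that `ψ - ψ (1/p)` changes
sign only at `1/p`, so `1/p` is a global extremum of `G` on the segment.
-/

open Real Set

lemma rpow_eq_rpow_sub_one_mul {x : ℝ} (hx : 0 ≤ x) {p : ℝ} (hp : p ≠ 0) :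
    x ^ p = x ^ (p - 1) * x := by
  rw [← rpow_add_one' hx (by simpa using hp), sub_add_cancel]

lemma isMinOn_of_hasDerivAt_nonpos_nonneg {f f' : ℝ → ℝ} {a b c : ℝ}
    (hf : ∀ x, HasDerivAt f (f' x) x) (hleft : ∀ x ∈ Ioo a c, f' x ≤ 0)
    (hright : ∀ x ∈ Ioo c b, 0 ≤ f' x) : IsMinOn f (Icc a b) c := by
  have hcont : Continuous f := continuous_iff_continuousAt.2 fun x => (hf x).continuousAt
  have hdiff {s : Set ℝ} : DifferentiableOn ℝ f s :=
    fun x _ => (hf x).differentiableAt.differentiableWithinAt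
  intro x hx
  rcases le_total x c with hxc | hcx
  · refine antitoneOn_of_deriv_nonpos (convex_Icc a c) hcont.continuousOn hdiff (fun y hy => ?_)
      ⟨hx.1, hxc⟩ ⟨hx.1.trans hxc, le_rfl⟩ hxc
    rw [interior_Icc] at hy
    exact (hf y).deriv ▸ hleft y hy
  · refine monotoneOn_of_deriv_nonneg (convex_Icc c b) hcont.continuousOn hdiff (fun y hy => ?_)
      ⟨le_rfl, hcx.trans hx.2⟩ ⟨hcx, hx.2⟩ hcx
    rw [interior_Icc] at hy
    exact (hf y).deriv ▸ hright y hy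

lemma sub_two_mul_log_le_sub_one_mul_log_sub_one {p : ℝ} (hp : 2 ≤ p) :
    (p - 2) * log p ≤ (p - 1) * log (p - 1) := by
  have hq : 0 < p - 1 := by linarith
  have hlog_div : log p - log (p - 1) ≤ (p - 1)⁻¹ := by
    rw [← log_div (by linarith) hq.ne']
    convert log_le_sub_one_of_pos (div_pos (by linarith) hq) using 1
    field_simp
    ring
  calc (p - 2) * log p ≤ (p - 2) * (log (p - 1) + (p - 1)⁻¹) := by
        gcongr
        linarith
    _ = (p - 2) * log (p - 1) + (1 - (p - 1)⁻¹) := by field_simp; ring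
    _ ≤ (p - 1) * log (p - 1) := by linarith [one_sub_inv_le_log_of_pos hq]

lemma sub_one_mul_log_sub_one_le_sub_two_mul_log {p : ℝ} (hp1 : 1 < p) (hp2 : p ≤ 2) :
    (p - 1) * log (p - 1) ≤ (p - 2) * log p := by
  have hq : 0 < p - 1 := by linarith
  have hlog_p := log_le_sub_one_of_pos (by linarith : 0 < p)
  have hlog_q := log_le_sub_one_of_pos hq
  nlinarith [mul_le_mul_of_nonneg_left hlog_q hq.le,
    mul_le_mul_of_nonneg_left hlog_p (by linarith : (0 : ℝ) ≤ 2 - p)]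

/-- `V - Φ_p` for `V = (p*-1)^p |z|^p - |w|^p`, written with `q = p* - 1`; note that
`q / (q + 1) = 1 - 1/p*`. -/
noncomputable def burkholderGap (p q a b : ℝ) : ℝ :=
  q ^ p * a ^ p - b ^ p - p * (q / (q + 1)) ^ (p - 1) * (q * a - b) * (a + b) ^ (p - 1)

lemma burkholderGap_mul_mul {p : ℝ} (hp : p ≠ 0) (q : ℝ) {t a b : ℝ} (ht : 0 ≤ t) (ha : 0 ≤ a)
    (hb : 0 ≤ b) : burkholderGap p q (t * a) (t * b) = t ^ p * burkholderGap p q a b := by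
  rw [burkholderGap, burkholderGap, ← mul_add, mul_rpow ht ha, mul_rpow ht hb,
    mul_rpow ht (add_nonneg ha hb), rpow_eq_rpow_sub_one_mul ht hp]
  ring

lemma burkholderGap_inv (p : ℝ) {q : ℝ} (hq : 0 < q) (a b : ℝ) :
    burkholderGap p q⁻¹ a b = -(q⁻¹ ^ p * burkholderGap p q b a) := by
  have hq1 : q⁻¹ / (q⁻¹ + 1) = (q + 1)⁻¹ := by field_simp; ring
  rw [burkholderGap, burkholderGap, hq1, div_rpow hq.le (by positivity), inv_rpow hq.le,
    inv_rpow (by positivity), rpow_sub_one hq.ne']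
  field_simp
  rw [add_comm b a]
  ring

lemma burkholderGap_sign_of_segment {p q σ a b : ℝ} (hp : p ≠ 0)
    (hseg : ∀ t ∈ Icc (0 : ℝ) 1, 0 ≤ σ * burkholderGap p q t (1 - t)) (ha : 0 ≤ a) (hb : 0 ≤ b) :
    0 ≤ σ * burkholderGap p q a b := by
  rcases (add_nonneg ha hb).eq_or_lt with hs | hs
  · obtain ⟨rfl, rfl⟩ : a = 0 ∧ b = 0 := ⟨by linarith, by linarith⟩
    simp [burkholderGap, zero_rpow hp]
  · have ht : a / (a + b) ∈ Icc (0 : ℝ) 1 := ⟨by positivity, (div_le_one hs).2 (by linarith)⟩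
    have hsplit : burkholderGap p q a b =
        burkholderGap p q ((a + b) * (a / (a + b))) ((a + b) * (1 - a / (a + b))) := by
      congr 1
      · field_simp
      · field_simp; ring
    rw [hsplit, burkholderGap_mul_mul hp q hs.le ht.1 (sub_nonneg.2 ht.2), mul_left_comm]
    exact mul_nonneg (by positivity) (hseg _ ht)

noncomputable def burkholderPsi (p t : ℝ) : ℝ :=
  (p - 1) ^ p * t ^ (p - 1) + (1 - t) ^ (p - 1)

lemma burkholderPsi_zero {p : ℝ} (hp : 1 < p) : burkholderPsi p 0 = 1 := by
  simp [burkholderPsi, zero_rpow (by linarith : p - 1 ≠ 0)]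

lemma burkholderPsi_inv {p : ℝ} (hp : 1 ≤ p) :
    burkholderPsi p p⁻¹ = p * ((p - 1) / p) ^ (p - 1) := by
  have hp0 : 0 < p := by linarith
  rw [burkholderPsi, rpow_eq_rpow_sub_one_mul (by linarith) (by linarith : p ≠ 0),
    show 1 - p⁻¹ = (p - 1) / p by field_simp, div_rpow (by linarith) hp0.le,
    inv_rpow hp0.le]
  field_simp
  ring

lemma log_burkholderPsi_inv {p : ℝ} (hp : 1 < p) :
    log (burkholderPsi p p⁻¹) = (p - 1) * log (p - 1) - (p - 2) * log p := by
  have hp0 : 0 < p := by linarith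
  rw [burkholderPsi_inv hp.le, log_mul hp0.ne' (by positivity), log_rpow (by positivity),
    log_div (by linarith) hp0.ne']
  ring

lemma convexOn_burkholderPsi {p : ℝ} (hp : 2 ≤ p) : ConvexOn ℝ (Icc 0 1) (burkholderPsi p) := by
  have hq : 1 ≤ p - 1 := by linarith
  have hpow : ConvexOn ℝ (Icc 0 1) fun t : ℝ => t ^ (p - 1) :=
    (convexOn_rpow hq).subset Icc_subset_Ici_self (convex_Icc 0 1)
  have hpow' : ConvexOn ℝ (Icc 0 1) fun t : ℝ => (1 - t) ^ (p - 1) :=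
    ((convexOn_rpow hq).comp_affineMap (AffineMap.const ℝ ℝ 1 - AffineMap.id ℝ ℝ)).subset
      (fun t ht => by simpa using ht.2) (convex_Icc 0 1)
  exact (hpow.smul (rpow_nonneg (by linarith) p)).add hpow'

lemma concaveOn_burkholderPsi {p : ℝ} (hp1 : 1 ≤ p) (hp2 : p ≤ 2) :
    ConcaveOn ℝ (Icc 0 1) (burkholderPsi p) := by
  have hq0 : 0 ≤ p - 1 := by linarith
  have hq1 : p - 1 ≤ 1 := by linarith
  have hpow : ConcaveOn ℝ (Icc 0 1) fun t : ℝ => t ^ (p - 1) :=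
    (concaveOn_rpow hq0 hq1).subset Icc_subset_Ici_self (convex_Icc 0 1)
  have hpow' : ConcaveOn ℝ (Icc 0 1) fun t : ℝ => (1 - t) ^ (p - 1) :=
    ((concaveOn_rpow hq0 hq1).comp_affineMap (AffineMap.const ℝ ℝ 1 - AffineMap.id ℝ ℝ)).subset
      (fun t ht => by simpa using ht.2) (convex_Icc 0 1)
  exact (hpow.smul (rpow_nonneg hq0 p)).add hpow'

lemma burkholderGap_sub_one_segment (p t : ℝ) :
    burkholderGap p (p - 1) t (1 - t) =
      (p - 1) ^ p * t ^ p - (1 - t) ^ p - p * ((p - 1) / p) ^ (p - 1) * (p * t - 1) := by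
  rw [burkholderGap, sub_add_cancel, add_sub_cancel, one_rpow]
  ring

lemma burkholderGap_sub_one_segment_inv {p : ℝ} (hp : 1 ≤ p) :
    burkholderGap p (p - 1) p⁻¹ (1 - p⁻¹) = 0 := by
  have hp0 : 0 < p := by linarith
  rw [burkholderGap_sub_one_segment, ← mul_rpow (by linarith) (by positivity),
    show 1 - p⁻¹ = (p - 1) / p by field_simp, ← div_eq_mul_inv, mul_inv_cancel₀ hp0.ne']
  ring

lemma hasDerivAt_burkholderGap_sub_one_segment {p : ℝ} (hp : 1 ≤ p) (t : ℝ) :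
    HasDerivAt (fun t => burkholderGap p (p - 1) t (1 - t))
      (p * (burkholderPsi p t - burkholderPsi p p⁻¹)) t := by
  have hpow : HasDerivAt (fun t : ℝ => t ^ p) (p * t ^ (p - 1)) t :=
    hasDerivAt_rpow_const (Or.inr hp)
  have hpow' : HasDerivAt (fun t : ℝ => (1 - t) ^ p) (-1 * p * (1 - t) ^ (p - 1)) t :=
    ((hasDerivAt_id t).const_sub 1).rpow_const (Or.inr hp)
  have hlin : HasDerivAt (fun t : ℝ => p * t - 1) p t := by
    simpa using ((hasDerivAt_id t).const_mul p).sub_const 1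
  simp_rw [burkholderGap_sub_one_segment]
  refine (((hpow.const_mul ((p - 1) ^ p)).sub hpow').sub
    (hlin.const_mul (p * ((p - 1) / p) ^ (p - 1)))).congr_deriv ?_
  rw [burkholderPsi_inv hp, burkholderPsi]
  ring

/-- The sign `σ = 1` handles `p ≥ 2` and `σ = -1` handles `p ≤ 2`. -/
lemma burkholderGap_sub_one_segment_sign {p σ t : ℝ} (hp : 1 < p)
    (hconv : ConvexOn ℝ (Icc 0 1) (σ • burkholderPsi p))
    (hend : (σ • burkholderPsi p) 0 ≤ (σ • burkholderPsi p) p⁻¹) (ht : t ∈ Icc 0 1) :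
    0 ≤ σ * burkholderGap p (p - 1) t (1 - t) := by
  have hc : p⁻¹ ∈ Ioo (0 : ℝ) 1 := ⟨inv_pos.2 (by linarith), inv_lt_one_of_one_lt₀ hp⟩
  have h0 : (0 : ℝ) ∈ Icc (0 : ℝ) 1 := left_mem_Icc.2 zero_le_one
  have hderiv (x : ℝ) : σ * (p * (burkholderPsi p x - burkholderPsi p p⁻¹)) =
      p * ((σ • burkholderPsi p) x - (σ • burkholderPsi p) p⁻¹) := by
    simp only [Pi.smul_apply, smul_eq_mul]; ring
  have hmin : IsMinOn (fun t => σ * burkholderGap p (p - 1) t (1 - t)) (Icc 0 1) p⁻¹ := by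
    refine isMinOn_of_hasDerivAt_nonpos_nonneg
      (fun x => (hasDerivAt_burkholderGap_sub_one_segment hp.le x).const_mul σ)
      (fun x hx => ?_) (fun x hx => ?_)
    · have hle := hconv.le_on_segment h0 (Ioo_subset_Icc_self hc)
        (Icc_subset_segment (Ioo_subset_Icc_self hx))
      rw [max_eq_right hend] at hle
      rw [hderiv]
      exact mul_nonpos_of_nonneg_of_nonpos (by linarith) (sub_nonpos.2 hle)
    · have hge := hconv.le_right_of_left_le'' h0 ⟨hc.1.le.trans hx.1.le, hx.2.le⟩ hc.1 hx.1.le hend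
      rw [hderiv]
      exact mul_nonneg (by linarith) (sub_nonneg.2 hge)
  simpa [burkholderGap_sub_one_segment_inv hp.le] using hmin ht

theorem burkholderGap_nonneg {p a b : ℝ} (hp : 2 ≤ p) (ha : 0 ≤ a) (hb : 0 ≤ b) :
    0 ≤ burkholderGap p (p - 1) a b := by
  have hp1 : 1 < p := by linarith
  have hend : 1 ≤ burkholderPsi p p⁻¹ := by
    rw [← log_nonneg_iff (by rw [burkholderPsi_inv hp1.le]; positivity), log_burkholderPsi_inv hp1]
    linarith [sub_two_mul_log_le_sub_one_mul_log_sub_one hp]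
  have hseg (t : ℝ) (ht : t ∈ Icc (0 : ℝ) 1) : 0 ≤ 1 * burkholderGap p (p - 1) t (1 - t) :=
    burkholderGap_sub_one_segment_sign hp1 (by simpa only [one_smul] using convexOn_burkholderPsi hp)
      (by simpa [burkholderPsi_zero hp1] using hend) ht
  simpa using burkholderGap_sign_of_segment (by linarith : (0 : ℝ) < p).ne' hseg ha hb

theorem burkholderGap_nonpos {p a b : ℝ} (hp1 : 1 < p) (hp2 : p ≤ 2) (ha : 0 ≤ a) (hb : 0 ≤ b) :
    burkholderGap p (p - 1) a b ≤ 0 := by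
  have hend : burkholderPsi p p⁻¹ ≤ 1 := by
    rw [← log_nonpos_iff (by rw [burkholderPsi_inv hp1.le]; positivity), log_burkholderPsi_inv hp1]
    linarith [sub_one_mul_log_sub_one_le_sub_two_mul_log hp1 hp2]
  have hseg (t : ℝ) (ht : t ∈ Icc (0 : ℝ) 1) : 0 ≤ -1 * burkholderGap p (p - 1) t (1 - t) :=
    burkholderGap_sub_one_segment_sign hp1
      (by rw [neg_one_smul]; exact (concaveOn_burkholderPsi hp1.le hp2).neg)
      (by simpa [burkholderPsi_zero hp1] using hend) ht
  simpa using burkholderGap_sign_of_segment (by linarith : (0 : ℝ) < p).ne' hseg ha hb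

/-- Burkholder's inequality: Φ_p(z,w) ≤ (p*−1)^p |z|^p − |w|^p. -/
theorem stmt0 (p : ℝ) (hp : 1 < p) (z w : ℂ) :
    (p * (1 - 1 / max p (p / (p - 1))) ^ (p - 1)) *
        ((max p (p / (p - 1)) - 1) * ‖z‖ - ‖w‖) *
        (‖z‖ + ‖w‖) ^ (p - 1)
      ≤ (max p (p / (p - 1)) - 1) ^ p * ‖z‖ ^ p - ‖w‖ ^ p := by
  have hq : 0 < p - 1 := by linarith
  have hgap : 0 ≤ burkholderGap p (max p (p / (p - 1)) - 1) ‖z‖ ‖w‖ := by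
    rcases le_total 2 p with hp2 | hp2
    · rw [max_eq_left ((div_le_iff₀ hq).2 (by nlinarith))]
      exact burkholderGap_nonneg hp2 (norm_nonneg z) (norm_nonneg w)
    · rw [max_eq_right ((le_div_iff₀ hq).2 (by nlinarith)),
        show p / (p - 1) - 1 = (p - 1)⁻¹ by field_simp; ring, burkholderGap_inv p hq,
        neg_nonneg]
      exact mul_nonpos_of_nonneg_of_nonpos (by positivity)
        (burkholderGap_nonpos hp hp2 (norm_nonneg w) (norm_nonneg z))
  have hmax : 0 < max p (p / (p - 1)) := lt_max_of_lt_left (by linarith)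
  rw [burkholderGap, sub_add_cancel, ← one_sub_div hmax.ne'] at hgap
  linarith
end

section
/- For 1 < p < 2 and all complex numbers z, w, the integral ∫₀^∞ t^{p−1} L(z/t, w/t) dt equals β_p Φ_p(z,w), where β_p = (½ p (2−p) α_p)^{−1}. -/
open MeasureTheory

/-- The Burkholder–Šverák function L. -/
noncomputable def L (z w : ℂ) : ℝ :=
  if ‖z‖ + ‖w‖ ≤ 1 then (‖z‖) ^ 2 - (‖w‖) ^ 2
  else 2 * ‖z‖ - 1

/-- p* = max(p, p'). -/
noncomputable def pstar (p : ℝ) : ℝ := max p (p / (p - 1))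

/-- Burkholder's constant α_p. -/
noncomputable def alphap (p : ℝ) : ℝ := p * (1 - 1 / pstar p) ^ (p - 1)

/-- Burkholder's function Φ_p. -/
noncomputable def Phip (p : ℝ) (z w : ℂ) : ℝ :=
  alphap p * ((pstar p - 1) * ‖z‖ - ‖w‖) *
    (‖z‖ + ‖w‖) ^ (p - 1)

/-!
With `a = ‖z‖`, `b = ‖w‖` and `s = a + b`, the point `(z / t, w / t)` lies outside the unit
"ball" `‖·‖ + ‖·‖ ≤ 1` exactly when `t < s`. The integrand is therefore `2 a t^(p-2) - t^(p-1)`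
on `(0, s)` and `(a² - b²) t^(p-3)` on `(s, ∞)`; both are integrable precisely because
`1 < p < 2`, and integrating the powers gives
`2 a s^(p-1) / (p-1) - s^p / p + (a² - b²) s^(p-2) / (2-p)`, which simplifies to
`2 (a / (p-1) - b) s^(p-1) / (p (2-p))`. This is `β_p Φ_p(z, w)` once `p* = p / (p-1)` is
substituted into `Φ_p`.
-/

open Set

lemma pstar_eq_div_sub_one {p : ℝ} (hp1 : 1 < p) (hp2 : p ≤ 2) : pstar p = p / (p - 1) := by
  rw [pstar, max_eq_right]
  rw [le_div_iff₀ (by linarith)]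
  nlinarith

lemma alphap_pos {p : ℝ} (hp : 1 < p) : 0 < alphap p := by
  have hpstar : 1 < pstar p := hp.trans_le (le_max_left _ _)
  have hbase : 0 < 1 - 1 / pstar p := by
    rw [sub_pos, div_lt_one (by linarith)]
    exact hpstar
  exact mul_pos (by linarith) (Real.rpow_pos_of_pos hbase _)

lemma L_div_ofReal (z w : ℂ) {t : ℝ} (ht : 0 < t) :
    L (z / t) (w / t) =
      if ‖z‖ + ‖w‖ ≤ t then (‖z‖ ^ 2 - ‖w‖ ^ 2) / t ^ 2 else 2 * ‖z‖ / t - 1 := by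
  have hnorm (u : ℂ) : ‖u / t‖ = ‖u‖ / t := by
    rw [norm_div, Complex.norm_real, Real.norm_of_nonneg ht.le]
  simp only [L, hnorm, ← add_div, div_le_one ht, div_pow, sub_div, mul_div_assoc]

section Integrand

variable {p : ℝ} {z w : ℂ}

lemma rpow_mul_L_div_of_lt {t : ℝ} (ht : 0 < t) (hts : t < ‖z‖ + ‖w‖) :
    t ^ (p - 1) * L (z / t) (w / t) = 2 * ‖z‖ * t ^ (p - 2) - t ^ (p - 1) := by
  have hpow : t ^ (p - 2) = t ^ (p - 1) / t := by
    rw [← Real.rpow_sub_one ht.ne']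
    ring_nf
  rw [L_div_ofReal z w ht, if_neg hts.not_ge, hpow]
  field_simp

lemma rpow_mul_L_div_of_le {t : ℝ} (ht : 0 < t) (hst : ‖z‖ + ‖w‖ ≤ t) :
    t ^ (p - 1) * L (z / t) (w / t) = (‖z‖ ^ 2 - ‖w‖ ^ 2) * t ^ (p - 3) := by
  have hpow : t ^ (p - 3) = t ^ (p - 1) / t ^ 2 := by
    rw [← Real.rpow_two, ← Real.rpow_sub ht]
    ring_nf
  rw [L_div_ofReal z w ht, if_pos hst, hpow]
  field_simp

lemma eqOn_rpow_mul_L_div_uIoo :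
    EqOn (fun t : ℝ => t ^ (p - 1) * L (z / t) (w / t))
      (fun t => 2 * ‖z‖ * t ^ (p - 2) - t ^ (p - 1)) (uIoo 0 (‖z‖ + ‖w‖)) := by
  rw [uIoo_of_le (by positivity)]
  exact fun t ht => rpow_mul_L_div_of_lt ht.1 ht.2

lemma eqOn_rpow_mul_L_div_Ioi :
    EqOn (fun t : ℝ => t ^ (p - 1) * L (z / t) (w / t))
      (fun t => (‖z‖ ^ 2 - ‖w‖ ^ 2) * t ^ (p - 3)) (Ioi (‖z‖ + ‖w‖)) :=
  fun t ht => rpow_mul_L_div_of_le ((by positivity : (0 : ℝ) ≤ _).trans_lt ht) (le_of_lt ht)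

lemma intervalIntegrable_rpow_mul_L_div (hp : 1 < p) :
    IntervalIntegrable (fun t : ℝ => t ^ (p - 1) * L (z / t) (w / t)) volume 0 (‖z‖ + ‖w‖) := by
  refine (intervalIntegrable_congr_uIoo eqOn_rpow_mul_L_div_uIoo).mpr ?_
  exact ((intervalIntegral.intervalIntegrable_rpow' (by linarith)).const_mul _).sub
    (intervalIntegral.intervalIntegrable_rpow' (by linarith))

lemma intervalIntegral_zero_norm_add_rpow_mul_L_div (hp : 1 < p) :
    ∫ t in (0 : ℝ)..‖z‖ + ‖w‖, t ^ (p - 1) * L (z / t) (w / t) =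
      2 * ‖z‖ * (‖z‖ + ‖w‖) ^ (p - 1) / (p - 1) - (‖z‖ + ‖w‖) ^ p / p := by
  have hint_sub_two := intervalIntegral.intervalIntegrable_rpow' (a := 0) (b := ‖z‖ + ‖w‖)
    (show -1 < p - 2 by linarith)
  have hint_sub_one := intervalIntegral.intervalIntegrable_rpow' (a := 0) (b := ‖z‖ + ‖w‖)
    (show -1 < p - 1 by linarith)
  rw [intervalIntegral.integral_congr_uIoo eqOn_rpow_mul_L_div_uIoo,
    intervalIntegral.integral_sub (hint_sub_two.const_mul _) hint_sub_one,
    intervalIntegral.integral_const_mul, integral_rpow (Or.inl (by linarith)),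
    integral_rpow (Or.inl (by linarith)), Real.zero_rpow (by linarith),
    Real.zero_rpow (by linarith)]
  ring_nf

lemma integrableOn_Ioi_rpow_mul_L_div (hp : p < 2) (hs : 0 < ‖z‖ + ‖w‖) :
    IntegrableOn (fun t : ℝ => t ^ (p - 1) * L (z / t) (w / t)) (Ioi (‖z‖ + ‖w‖)) := by
  have h : IntegrableOn (fun t : ℝ => (‖z‖ ^ 2 - ‖w‖ ^ 2) * t ^ (p - 3)) (Ioi (‖z‖ + ‖w‖)) :=
    (integrableOn_Ioi_rpow_of_lt (by linarith) hs).const_mul _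
  exact h.congr_fun eqOn_rpow_mul_L_div_Ioi.symm measurableSet_Ioi

lemma integral_Ioi_norm_add_rpow_mul_L_div (hp : p < 2) (hs : 0 < ‖z‖ + ‖w‖) :
    ∫ t in Ioi (‖z‖ + ‖w‖), t ^ (p - 1) * L (z / t) (w / t) =
      (‖z‖ ^ 2 - ‖w‖ ^ 2) * (‖z‖ + ‖w‖) ^ (p - 2) / (2 - p) := by
  rw [setIntegral_congr_fun measurableSet_Ioi eqOn_rpow_mul_L_div_Ioi, integral_const_mul,
    integral_Ioi_rpow_of_lt (by linarith) hs, show p - 3 + 1 = p - 2 by ring, neg_div,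
    ← div_neg, neg_sub, mul_div_assoc]

end Integrand

theorem integral_Ioi_zero_rpow_mul_L_div {p : ℝ} (hp1 : 1 < p) (hp2 : p < 2) (z w : ℂ) :
    ∫ t in Ioi (0 : ℝ), t ^ (p - 1) * L (z / t) (w / t) =
      2 * (‖z‖ / (p - 1) - ‖w‖) * (‖z‖ + ‖w‖) ^ (p - 1) / (p * (2 - p)) := by
  obtain hs | hs := (add_nonneg (norm_nonneg z) (norm_nonneg w)).eq_or_lt
  · obtain ⟨hz, hw⟩ := (add_eq_zero_iff_of_nonneg (norm_nonneg z) (norm_nonneg w)).mp hs.symm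
    simp [norm_eq_zero.mp hz, norm_eq_zero.mp hw, L, Real.zero_rpow (by linarith : p - 1 ≠ 0)]
  rw [← intervalIntegral.integral_interval_add_Ioi' (intervalIntegrable_rpow_mul_L_div hp1)
      (integrableOn_Ioi_rpow_mul_L_div hp2 hs),
    intervalIntegral_zero_norm_add_rpow_mul_L_div hp1, integral_Ioi_norm_add_rpow_mul_L_div hp2 hs]
  have hpow_p : (‖z‖ + ‖w‖) ^ p = (‖z‖ + ‖w‖) ^ (p - 1) * (‖z‖ + ‖w‖) := by
    rw [← Real.rpow_add_one hs.ne']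
    ring_nf
  have hpow_p_sub_two : (‖z‖ + ‖w‖) ^ (p - 2) = (‖z‖ + ‖w‖) ^ (p - 1) / (‖z‖ + ‖w‖) := by
    rw [← Real.rpow_sub_one hs.ne']
    ring_nf
  have hp0 : p ≠ 0 := by linarith
  have hp1' : p - 1 ≠ 0 := by linarith
  have hp2' : 2 - p ≠ 0 := by linarith
  rw [hpow_p, hpow_p_sub_two]
  field_simp
  ring

/-- For 1 < p < 2, ∫₀^∞ t^{p−1} L(z/t, w/t) dt = β_p Φ_p(z,w). -/
theorem stmt1 (p : ℝ) (hp1 : 1 < p) (hp2 : p < 2) (z w : ℂ) :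
    (∫ t in Set.Ioi (0 : ℝ), t ^ (p - 1) * L (z / (t : ℂ)) (w / (t : ℂ)))
      = ((1 / 2) * p * (2 - p) * alphap p)⁻¹ * Phip p z w := by
  have hα : alphap p ≠ 0 := (alphap_pos hp1).ne'
  have hp0 : p ≠ 0 := by linarith
  have hp1' : p - 1 ≠ 0 := by linarith
  have hp2' : 2 - p ≠ 0 := by linarith
  rw [integral_Ioi_zero_rpow_mul_L_div hp1 hp2, Phip, pstar_eq_div_sub_one hp1 hp2.le]
  field_simp
  ring
end

section
/- For 2 < p < ∞ and all complex numbers z, w, the integral ∫₀^∞ t^{p−1} M(w/t, z/t) dt equals γ_p Φ_p(z,w), where M(z,w) = (|w|² − (|z|−1)²)·1_{|z|+|w|>1} and γ_p = (½ p (p−1)(p−2) α_p)^{−1}. -/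
open MeasureTheory

/-- The function M(z,w) = (|w|² − (|z|−1)²)·1_{|z|+|w|>1}. -/
noncomputable def M (z w : ℂ) : ℝ :=
  if 1 < ‖z‖ + ‖w‖ then
    (‖w‖) ^ 2 - (‖z‖ - 1) ^ 2
  else 0

/-!
Homogeneity turns the integrand into `t ^ (p - 1) * (|z|² - (|w| - t)²) / t²` on `0 < t < |z| + |w|`
and into `0` beyond, so the integral is a combination of three power moments over
`[0, |z| + |w|]`. Collecting them, the coefficients of `|z|` and `|w|` are proportional to
`p - 1` and `-1`, with the common factor `2 / (p (p - 1) (p - 2))`; this is `γ_p Φ_p(z, w)`.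
-/

open Set

lemma pstar_eq_self {p : ℝ} (hp : 2 ≤ p) : pstar p = p :=
  max_eq_left <| by rw [div_le_iff₀ (by linarith)]; nlinarith

lemma M_div_ofReal (z w : ℂ) {t : ℝ} (ht : 0 < t) :
    M (w / t) (z / t) =
      if t < ‖z‖ + ‖w‖ then (‖z‖ ^ 2 - (‖w‖ - t) ^ 2) / t ^ 2 else 0 := by
  have hnorm : ∀ u : ℂ, ‖u / t‖ = ‖u‖ / t := fun u => by
    rw [norm_div, Complex.norm_of_nonneg ht.le]
  have hcond : 1 < ‖w‖ / t + ‖z‖ / t ↔ t < ‖z‖ + ‖w‖ := by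
    rw [← add_div, one_lt_div ht, add_comm]
  rw [M, hnorm, hnorm]
  split_ifs with h₁ h₂ h₂
  · field_simp
  · exact absurd (hcond.mp h₁) h₂
  · exact absurd (hcond.mpr h₂) h₁
  · rfl

lemma rpow_mul_M_div_ofReal (p : ℝ) (z w : ℂ) {t : ℝ} (ht : 0 < t) :
    t ^ (p - 1) * M (w / t) (z / t) =
      (Ioo 0 (‖z‖ + ‖w‖)).indicator
        (fun t => (‖z‖ ^ 2 - ‖w‖ ^ 2) * t ^ (p - 3) + 2 * ‖w‖ * t ^ (p - 2) - t ^ (p - 1)) t := by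
  rw [M_div_ofReal z w ht]
  split_ifs with h
  · rw [indicator_of_mem (mem_Ioo.mpr ⟨ht, h⟩)]
    have h₂ : t ^ (p - 2) = t ^ (p - 3) * t := by
      rw [← Real.rpow_add_one ht.ne']; ring_nf
    have h₁ : t ^ (p - 1) = t ^ (p - 3) * t ^ 2 := by
      rw [← Real.rpow_add_natCast ht.ne']; ring_nf
    rw [h₁, h₂]
    field_simp
    ring
  · rw [indicator_of_notMem (fun hmem => h hmem.2), mul_zero]

lemma setIntegral_Ioi_indicator_Ioo {s : ℝ} (hs : 0 ≤ s) (f : ℝ → ℝ) :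
    ∫ t in Ioi 0, (Ioo 0 s).indicator f t = ∫ t in (0)..s, f t := by
  rw [setIntegral_indicator measurableSet_Ioo,
    inter_eq_self_of_subset_right Ioo_subset_Ioi_self,
    ← integral_Ioc_eq_integral_Ioo, intervalIntegral.integral_of_le hs]

lemma integral_zero_rpow_sub_one {q : ℝ} (hq : 0 < q) (s : ℝ) :
    ∫ t in (0)..s, t ^ (q - 1) = s ^ q / q := by
  rw [integral_rpow (Or.inl (by linarith)), sub_add_cancel, Real.zero_rpow hq.ne', sub_zero]

lemma intervalIntegrable_rpow_sub_one {q : ℝ} (hq : 0 < q) (s : ℝ) :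
    IntervalIntegrable (fun t : ℝ => t ^ (q - 1)) volume 0 s :=
  intervalIntegral.intervalIntegrable_rpow' (by linarith)

lemma integral_moment_combination {p : ℝ} (hp : 2 < p) (a b s : ℝ) :
    ∫ t in (0)..s, (a * t ^ (p - 3) + b * t ^ (p - 2) - t ^ (p - 1)) =
      a * (s ^ (p - 2) / (p - 2)) + b * (s ^ (p - 1) / (p - 1)) - s ^ p / p := by
  have h₃ : p - 3 = (p - 2) - 1 := by ring
  have h₂ : p - 2 = (p - 1) - 1 := by ring
  have i₃ := (intervalIntegrable_rpow_sub_one (q := p - 2) (by linarith) s).const_mul a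
  have i₂ := (intervalIntegrable_rpow_sub_one (q := p - 1) (by linarith) s).const_mul b
  have i₁ := intervalIntegrable_rpow_sub_one (q := p) (by linarith) s
  rw [h₃, h₂] at *
  rw [intervalIntegral.integral_sub (i₃.add i₂) i₁, intervalIntegral.integral_add i₃ i₂,
    intervalIntegral.integral_const_mul, intervalIntegral.integral_const_mul,
    integral_zero_rpow_sub_one (by linarith), integral_zero_rpow_sub_one (by linarith),
    integral_zero_rpow_sub_one (by linarith)]

lemma moment_combination_eq {p a b : ℝ} (hp : 2 < p) (ha : 0 ≤ a) (hb : 0 ≤ b) :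
    (a ^ 2 - b ^ 2) * ((a + b) ^ (p - 2) / (p - 2)) + 2 * b * ((a + b) ^ (p - 1) / (p - 1))
        - (a + b) ^ p / p =
      2 / (p * (p - 1) * (p - 2)) * ((p - 1) * a - b) * (a + b) ^ (p - 1) := by
  have hs : 0 ≤ a + b := by positivity
  have h₁ : (a + b) ^ (p - 1) = (a + b) ^ (p - 2) * (a + b) := by
    rw [← Real.rpow_add_one' hs (by linarith)]; ring_nf
  have h₀ : (a + b) ^ p = (a + b) ^ (p - 2) * (a + b) ^ 2 := by
    rw [← Real.rpow_add_natCast' hs (by push_cast; linarith)]; ring_nf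
  have : p - 2 ≠ 0 := by linarith
  have : p - 1 ≠ 0 := by linarith
  have : p ≠ 0 := by linarith
  rw [h₀, h₁]
  field_simp
  ring

/-- For 2 < p < ∞, ∫₀^∞ t^{p−1} M(w/t, z/t) dt = γ_p Φ_p(z,w). -/
theorem stmt2 (p : ℝ) (hp : 2 < p) (z w : ℂ) :
    (∫ t in Set.Ioi (0 : ℝ), t ^ (p - 1) * M (w / (t : ℂ)) (z / (t : ℂ)))
      = ((1 / 2) * p * (p - 1) * (p - 2) * alphap p)⁻¹ * Phip p z w := by
  rw [setIntegral_congr_fun measurableSet_Ioi fun t ht => rpow_mul_M_div_ofReal p z w ht,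
    setIntegral_Ioi_indicator_Ioo (by positivity), integral_moment_combination hp,
    moment_combination_eq hp (norm_nonneg z) (norm_nonneg w),
    Phip, pstar_eq_self hp.le]
  have hα := (alphap_pos (by linarith : (1 : ℝ) < p)).ne'
  have : p - 2 ≠ 0 := by linarith
  have : p - 1 ≠ 0 := by linarith
  have : p ≠ 0 := by linarith
  field_simp
end

section
/- The function L₁ : ℝ^{2×2} → ℝ defined by L₁ = L ∘ α is rank one convex: for every pair of real 2×2 matrices A, B with rank B ≤ 1, the map t ↦ L₁(A + tB) is convex on ℝ. -/
/-- First component of α : ℝ^{2×2} → ℂ². -/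
noncomputable def alpha1 (A : Matrix (Fin 2) (Fin 2) ℝ) : ℂ :=
  (1 / 2 : ℂ) * (((A 0 0 + A 1 1 : ℝ) : ℂ) + ((A 1 0 - A 0 1 : ℝ) : ℂ) * Complex.I)

/-- Second component of α : ℝ^{2×2} → ℂ². -/
noncomputable def alpha2 (A : Matrix (Fin 2) (Fin 2) ℝ) : ℂ :=
  (1 / 2 : ℂ) * (((A 0 0 - A 1 1 : ℝ) : ℂ) + ((A 1 0 + A 0 1 : ℝ) : ℂ) * Complex.I)

/-- L₁ = L ∘ α. -/
noncomputable def L1 (A : Matrix (Fin 2) (Fin 2) ℝ) : ℝ := L (alpha1 A) (alpha2 A)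

/-!
On a rank-one line `t ↦ A + t • B` we have `det B = 0`, i.e. `|α₁ B| = |α₂ B|`, so the two
components move as `z + t b`, `w + t c` with `|b| = |c|`. Then `|z + t b|² - |w + t c|²` is
affine in `t`, and `|z + t b| - |w + t c| ≤ |z + s b| + |w + s c|` for all `s`, `t`.
If the line meets the region `|z| + |w| ≤ 1`, this gives `|z| - |w| ≤ 1` along the whole line,
and there `L` is the maximum of `|z|² - |w|²` and `2|z| - 1`; otherwise `L = 2|z| - 1` along the
line. Either way `L` restricted to the line is a maximum of convex functions.
-/

lemma convexOn_norm_add_smul {E : Type*} [NormedAddCommGroup E] [NormedSpace ℝ E] (z b : E) :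
    ConvexOn ℝ Set.univ (fun t : ℝ => ‖z + t • b‖) := by
  have := (convexOn_norm (E := E) convex_univ).comp_affineMap (AffineMap.lineMap z (z + b))
  simpa [Function.comp_def, AffineMap.lineMap_apply, add_comm] using this

lemma sq_norm_add_smul_sub_sq_norm_add_smul {E : Type*} [NormedAddCommGroup E]
    [InnerProductSpace ℝ E] {z w b c : E} (h : ‖b‖ = ‖c‖) (t : ℝ) :
    ‖z + t • b‖ ^ 2 - ‖w + t • c‖ ^ 2
      = ‖z‖ ^ 2 - ‖w‖ ^ 2 + t * (2 * (inner ℝ z b - inner ℝ w c)) := by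
  rw [norm_add_sq_real, norm_add_sq_real, inner_smul_right, inner_smul_right, norm_smul,
    norm_smul, h]
  ring

lemma convexOn_add_mul (a k : ℝ) : ConvexOn ℝ Set.univ (fun t : ℝ => a + t * k) :=
  ((LinearMap.mul ℝ ℝ).flip k |>.convexOn convex_univ).add_const a |>.congr
    fun _ _ => add_comm _ _

lemma exists_norm_eq_one_mul_eq {b c : ℂ} (h : ‖b‖ = ‖c‖) :
    ∃ u : ℂ, ‖u‖ = 1 ∧ b = u * c := by
  rcases eq_or_ne c 0 with rfl | hc
  · exact ⟨1, norm_one, by simpa using h⟩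
  · exact ⟨b / c, by rw [norm_div, h, div_self (norm_ne_zero_iff.2 hc)],
      (div_mul_cancel₀ b hc).symm⟩

/-- Writing `b = u c` with `|u| = 1`, the difference `z + t b - u (w + t c)` is independent
of `t`. -/
lemma norm_add_smul_sub_norm_add_smul_le {z w b c : ℂ} (h : ‖b‖ = ‖c‖) (s t : ℝ) :
    ‖z + t • b‖ - ‖w + t • c‖ ≤ ‖z + s • b‖ + ‖w + s • c‖ := by
  obtain ⟨u, hu, rfl⟩ := exists_norm_eq_one_mul_eq h
  have key (r : ℝ) : z + r • (u * c) - u * (w + r • c) = z - u * w := by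
    rw [mul_add, mul_smul_comm]
    abel
  calc ‖z + t • (u * c)‖ - ‖w + t • c‖
      ≤ ‖z + t • (u * c) - u * (w + t • c)‖ := by
        simpa [hu] using norm_sub_norm_le (z + t • (u * c)) (u * (w + t • c))
    _ = ‖z + s • (u * c) - u * (w + s • c)‖ := by rw [key, key]
    _ ≤ ‖z + s • (u * c)‖ + ‖w + s • c‖ := by
        simpa [hu] using norm_sub_le (z + s • (u * c)) (u * (w + s • c))

/-- The two branches differ by `(1 - ‖z‖ - ‖w‖) * (1 - ‖z‖ + ‖w‖)`. -/
lemma L_eq_max_of_norm_sub_norm_le_one {z w : ℂ} (h : ‖z‖ - ‖w‖ ≤ 1) :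
    L z w = max (‖z‖ ^ 2 - ‖w‖ ^ 2) (2 * ‖z‖ - 1) := by
  have hz := norm_nonneg z
  have hw := norm_nonneg w
  unfold L
  split_ifs
  · exact (max_eq_left (by nlinarith)).symm
  · exact (max_eq_right (by nlinarith)).symm

theorem convexOn_L_add_smul {z w b c : ℂ} (h : ‖b‖ = ‖c‖) :
    ConvexOn ℝ Set.univ (fun t : ℝ => L (z + t • b) (w + t • c)) := by
  have hnorm : ConvexOn ℝ Set.univ (fun t : ℝ => 2 * ‖z + t • b‖ - 1) :=
    (((convexOn_norm_add_smul z b).smul zero_le_two).add_const (-1)).congr fun _ _ => by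
      simp [sub_eq_add_neg]
  by_cases hmeet : ∃ s : ℝ, ‖z + s • b‖ + ‖w + s • c‖ ≤ 1
  · obtain ⟨s, hs⟩ := hmeet
    have hL (t : ℝ) : L (z + t • b) (w + t • c)
        = max (‖z‖ ^ 2 - ‖w‖ ^ 2 + t * (2 * (inner ℝ z b - inner ℝ w c)))
            (2 * ‖z + t • b‖ - 1) := by
      rw [L_eq_max_of_norm_sub_norm_le_one
        ((norm_add_smul_sub_norm_add_smul_le h s t).trans hs),
        sq_norm_add_smul_sub_sq_norm_add_smul h]
    simp only [hL]
    exact (convexOn_add_mul _ _).sup hnorm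
  · simp only [not_exists, not_le] at hmeet
    simpa only [L, if_neg (not_le.2 (hmeet _))] using hnorm

lemma alpha1_add_smul (A B : Matrix (Fin 2) (Fin 2) ℝ) (t : ℝ) :
    alpha1 (A + t • B) = alpha1 A + t • alpha1 B := by
  simp only [alpha1, Matrix.add_apply, Matrix.smul_apply, smul_eq_mul, Complex.real_smul]
  push_cast
  ring

lemma alpha2_add_smul (A B : Matrix (Fin 2) (Fin 2) ℝ) (t : ℝ) :
    alpha2 (A + t • B) = alpha2 A + t • alpha2 B := by
  simp only [alpha2, Matrix.add_apply, Matrix.smul_apply, smul_eq_mul, Complex.real_smul]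
  push_cast
  ring

lemma normSq_alpha1_sub_normSq_alpha2 (A : Matrix (Fin 2) (Fin 2) ℝ) :
    Complex.normSq (alpha1 A) - Complex.normSq (alpha2 A) = A.det := by
  rw [Matrix.det_fin_two]
  simp only [alpha1, alpha2, one_div, Complex.ofReal_add, Complex.ofReal_sub,
    Complex.normSq_apply, Complex.mul_re, Complex.mul_im, Complex.add_re, Complex.add_im,
    Complex.sub_re, Complex.sub_im, Complex.inv_re, Complex.inv_im, Complex.re_ofNat,
    Complex.im_ofNat, Complex.ofReal_re, Complex.ofReal_im, Complex.I_re,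
    Complex.I_im]
  ring

lemma det_eq_zero_of_rank_lt_card {n K : Type*} [Fintype n] [DecidableEq n] [Field K]
    {A : Matrix n n K} (hA : A.rank < Fintype.card n) : A.det = 0 := by
  by_contra h
  exact hA.ne (Matrix.rank_of_det_ne_zero h)

lemma norm_alpha1_eq_norm_alpha2_of_rank_le_one {A : Matrix (Fin 2) (Fin 2) ℝ}
    (hA : A.rank ≤ 1) : ‖alpha1 A‖ = ‖alpha2 A‖ := by
  have := normSq_alpha1_sub_normSq_alpha2 A
  rw [det_eq_zero_of_rank_lt_card (by simpa using Nat.lt_succ_of_le hA), sub_eq_zero] at this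
  rw [Complex.norm_def, Complex.norm_def, this]

/-- L₁ is rank one convex. -/
theorem stmt3 (A B : Matrix (Fin 2) (Fin 2) ℝ) (hB : B.rank ≤ 1) :
    ConvexOn ℝ Set.univ (fun t : ℝ => L1 (A + t • B)) := by
  simpa only [L1, alpha1_add_smul, alpha2_add_smul] using
    convexOn_L_add_smul (z := alpha1 A) (w := alpha2 A)
      (norm_alpha1_eq_norm_alpha2_of_rank_le_one hB)
end

section
/- Define f : ℂ → ℂ by f(z) = cz for |z| ≤ 1 and f(z) = c/conj(z) for |z| ≥ 1, where c ∈ ℂ is any nonzero constant. Then ∫_ℂ L(∂f, ∂̄f) dA = 0, where ∂f and ∂̄f are the a.e.-defined complex derivatives of f. -/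
open MeasureTheory

/-- Radial profile of the integrand. -/
noncomputable def hprof (A r : ℝ) : ℝ :=
  if r ≤ 1 then (if A ≤ 1 then A ^ 2 else 2 * A - 1)
  else (if A / r ^ 2 ≤ 1 then -(A / r ^ 2) ^ 2 else -1)

open Set in
lemma outer_integral (A s : ℝ) (hs : 0 < s) :
    ∫ y in Ioi s, -A ^ 2 * y ^ (-3 : ℝ) = -(A ^ 2 / s ^ 2) / 2 := by
  rw [integral_const_mul, integral_Ioi_rpow_of_lt (by norm_num) hs]
  have h2 : s ^ ((-3 : ℝ) + 1) = (s ^ 2)⁻¹ := by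
    rw [show (-3 : ℝ) + 1 = -((2 : ℕ) : ℝ) by norm_num, Real.rpow_neg hs.le, Real.rpow_natCast]
  rw [h2]
  field_simp
  ring

open Set in
lemma key (A : ℝ) (hA : 0 < A) :
    ∫ y in Ioi (0 : ℝ), y * hprof A y = 0 := by
  have hunion : Ioc (0 : ℝ) 1 ∪ Ioi 1 = Ioi 0 := Ioc_union_Ioi_eq_Ioi zero_le_one
  set C : ℝ := if A ≤ 1 then A ^ 2 else 2 * A - 1 with hC
  -- inner piece
  have hin_eq : ∀ y ∈ Ioc (0 : ℝ) 1, y * hprof A y = y * C := by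
    intro y hy; simp [hprof, hy.2, hC]
  have hin_int : IntegrableOn (fun y => y * hprof A y) (Ioc (0 : ℝ) 1) := by
    rw [integrableOn_congr_fun hin_eq measurableSet_Ioc]
    exact (continuous_id.mul continuous_const).integrableOn_Ioc
  have hin_val : ∫ y in Ioc (0 : ℝ) 1, y * hprof A y = C / 2 := by
    rw [setIntegral_congr_fun measurableSet_Ioc hin_eq, MeasureTheory.integral_mul_const,
      ← intervalIntegral.integral_of_le zero_le_one, integral_id]
    ring
  rcases le_or_gt A 1 with hA1 | hA1
  · -- small A: whole exterior is -A^2 * y^(-3)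
    have hout_eq : ∀ y ∈ Ioi (1 : ℝ), y * hprof A y = -A ^ 2 * y ^ (-3 : ℝ) := by
      intro y hy
      have hy1 : (1 : ℝ) < y := hy
      have hy0 : (0 : ℝ) < y := lt_trans one_pos hy1
      have hle : A / y ^ 2 ≤ 1 := by
        rw [div_le_one (by positivity)]; nlinarith
      have hr : y ^ (-3 : ℝ) = (y ^ 3)⁻¹ := by
        rw [show (-3 : ℝ) = -((3 : ℕ) : ℝ) by norm_num, Real.rpow_neg hy0.le, Real.rpow_natCast]
      rw [hprof, if_neg (by linarith), if_pos hle, hr]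
      field_simp
    have hout_int : IntegrableOn (fun y => y * hprof A y) (Ioi (1 : ℝ)) := by
      rw [integrableOn_congr_fun hout_eq measurableSet_Ioi]
      exact (integrableOn_Ioi_rpow_of_lt (by norm_num) one_pos).const_mul _
    have hout_val : ∫ y in Ioi (1 : ℝ), y * hprof A y = -(A ^ 2) / 2 := by
      rw [setIntegral_congr_fun measurableSet_Ioi hout_eq, outer_integral A 1 one_pos]
      ring
    rw [← hunion, setIntegral_union (Ioc_disjoint_Ioi le_rfl) measurableSet_Ioi hin_int hout_int,
      hin_val, hout_val, hC, if_pos hA1]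
    ring
  · -- large A: split exterior at s = sqrt A
    set s : ℝ := Real.sqrt A with hsdef
    have hs2 : s ^ 2 = A := Real.sq_sqrt hA.le
    have hs1 : 1 < s := by nlinarith [Real.sqrt_nonneg A]
    have hs0 : 0 < s := lt_trans one_pos hs1
    have hmid_eq : ∀ y ∈ Ioc (1 : ℝ) s, y * hprof A y = y * (-1) := by
      intro y hy
      have hy1 : (1 : ℝ) < y := hy.1
      have hy0 : (0 : ℝ) < y := lt_trans one_pos hy1
      have hyA : y ^ 2 ≤ A := by nlinarith [hy.2]
      rw [hprof, if_neg (by linarith)]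
      by_cases hcc : A / y ^ 2 ≤ 1
      · have : A / y ^ 2 = 1 :=
          le_antisymm hcc ((one_le_div (by positivity)).mpr hyA)
        rw [if_pos hcc, this]; ring
      · rw [if_neg hcc]
    have hmid_int : IntegrableOn (fun y => y * hprof A y) (Ioc (1 : ℝ) s) := by
      rw [integrableOn_congr_fun hmid_eq measurableSet_Ioc]
      exact (continuous_id.mul continuous_const).integrableOn_Ioc
    have hmid_val : ∫ y in Ioc (1 : ℝ) s, y * hprof A y = -((A - 1) / 2) := by
      rw [setIntegral_congr_fun measurableSet_Ioc hmid_eq, MeasureTheory.integral_mul_const,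
        ← intervalIntegral.integral_of_le hs1.le, integral_id]
      rw [hs2]; ring
    have hfar_eq : ∀ y ∈ Ioi s, y * hprof A y = -A ^ 2 * y ^ (-3 : ℝ) := by
      intro y hy
      have hys : s < y := hy
      have hy0 : (0 : ℝ) < y := lt_trans hs0 hys
      have hle : A / y ^ 2 ≤ 1 := by
        rw [div_le_one (by positivity)]; nlinarith
      have hr : y ^ (-3 : ℝ) = (y ^ 3)⁻¹ := by
        rw [show (-3 : ℝ) = -((3 : ℕ) : ℝ) by norm_num, Real.rpow_neg hy0.le, Real.rpow_natCast]
      rw [hprof, if_neg (by push_neg; exact lt_trans hs1 hys), if_pos hle, hr]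
      field_simp
    have hfar_int : IntegrableOn (fun y => y * hprof A y) (Ioi s) := by
      rw [integrableOn_congr_fun hfar_eq measurableSet_Ioi]
      exact (integrableOn_Ioi_rpow_of_lt (by norm_num) hs0).const_mul _
    have hfar_val : ∫ y in Ioi s, y * hprof A y = -A / 2 := by
      rw [setIntegral_congr_fun measurableSet_Ioi hfar_eq, outer_integral A s hs0, hs2]
      field_simp
    have hun2 : Ioc (1 : ℝ) s ∪ Ioi s = Ioi 1 := Ioc_union_Ioi_eq_Ioi hs1.le
    have hout_int : IntegrableOn (fun y => y * hprof A y) (Ioi (1 : ℝ)) := by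
      rw [← hun2]; exact hmid_int.union hfar_int
    have hout_val : ∫ y in Ioi (1 : ℝ), y * hprof A y = -((A - 1) / 2) + -A / 2 := by
      rw [← hun2, setIntegral_union (Ioc_disjoint_Ioi le_rfl) measurableSet_Ioi hmid_int hfar_int,
        hmid_val, hfar_val]
    rw [← hunion, setIntegral_union (Ioc_disjoint_Ioi le_rfl) measurableSet_Ioi hin_int hout_int,
      hin_val, hout_val, hC, if_neg (not_le.mpr hA1)]
    ring

/-- Equality in Conjecture 1 for f(z) = cz on the disk, c/z̄ outside. -/
theorem stmt11 (c : ℂ) (hc : c ≠ 0) (Df Dbf : ℂ → ℂ)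
    (hDf : ∀ z : ℂ, ‖z‖ < 1 → Df z = c)
    (hDf' : ∀ z : ℂ, 1 < ‖z‖ → Df z = 0)
    (hDbf : ∀ z : ℂ, ‖z‖ < 1 → Dbf z = 0)
    (hDbf' : ∀ z : ℂ, 1 < ‖z‖ → Dbf z = -c / (starRingEnd ℂ z) ^ 2) :
    (∫ z : ℂ, L (Df z) (Dbf z)) = 0 := by
  set A : ℝ := ‖c‖ with hAdef
  have hA : 0 < A := by simpa [hAdef] using (norm_pos_iff.mpr hc)
  have hsph : (volume : Measure ℂ) {z : ℂ | ‖z‖ = 1} = 0 := by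
    have h1 : {z : ℂ | ‖z‖ = 1} = Metric.sphere (0 : ℂ) 1 := by
      ext z; simp [Complex.dist_eq]
    rw [h1]
    exact Measure.addHaar_sphere volume 0 1
  have hae : ∀ᵐ z : ℂ, ‖z‖ ≠ 1 := by
    rw [ae_iff]
    simpa using hsph
  have hcongr : (∫ z : ℂ, L (Df z) (Dbf z)) = ∫ z : ℂ, hprof A ‖z‖ := by
    refine integral_congr_ae ?_
    filter_upwards [hae] with z hz
    rcases hz.lt_or_gt with h1 | h1
    · have hn : ‖z‖ ≤ 1 := h1.le
      rw [hDf z h1, hDbf z h1]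
      simp [L, hprof, hn, hAdef]
    · have hn : ¬ (‖z‖ ≤ 1) := by exact not_le.mpr h1
      have habs : ‖(-c / (starRingEnd ℂ z) ^ 2)‖ = A / ‖z‖ ^ 2 := by
        simp [norm_div, norm_pow, Complex.norm_conj, hAdef]
      rw [hDf' z h1, hDbf' z h1]
      simp only [L, hprof, if_neg hn, habs, norm_zero, zero_add]
      split_ifs <;> ring
  rw [hcongr, integral_fun_norm_addHaar (volume : Measure ℂ) (hprof A)]
  have hdim : Module.finrank ℝ ℂ = 2 := Complex.finrank_real_complex
  rw [hdim]
  have hvol : (volume : Measure ℂ).real (Metric.ball 0 1) = Real.pi := by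
    rw [measureReal_def, Complex.volume_ball]
    simp
  rw [hvol]
  have h0 : ∫ y in Set.Ioi (0 : ℝ), y ^ (2 - 1) • hprof A y = 0 := by
    have := key A hA
    simpa [smul_eq_mul] using this
  rw [h0]
  simp
end

section
/- For 0 < α < 1/p, define f_α(z) = z|z|^{−2α} for |z| ≤ 1 and f_α(z) = 1/conj(z) for |z| ≥ 1. Then the ratio ∫_ℂ |∂f_α|^p dA / ∫_ℂ |∂̄f_α|^p dA tends to (p−1)^p as α → 1/p. -/
/-!
In polar coordinates both integrals become one-dimensional power integrals,
`∫ |∂f_α|^p = 2π (1-α)^p / (2 - 2αp)` and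
`∫ |∂̄f_α|^p = 2π (α^p / (2 - 2αp) + 1 / (2p - 2))`.
The common blow-up factor `1 / (2 - 2αp)` cancels, leaving
`(1-α)^p / (α^p + (1 - αp) / (p - 1))`, which is continuous at `α = 1/p` with value
`((1 - 1/p) / (1/p))^p = (p - 1)^p`.
-/

open MeasureTheory Set Filter Topology

lemma integral_fun_norm_complex (f : ℝ → ℝ) :
    ∫ z : ℂ, f ‖z‖ = 2 * Real.pi * ∫ y in Ioi (0 : ℝ), y * f y := by
  simpa [Measure.real, Complex.volume_ball, mul_assoc] using
    integral_fun_norm_addHaar (volume : Measure ℂ) f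

lemma integral_ite_norm_lt_one_complex {u v : ℝ → ℝ}
    (hu : IntegrableOn (fun y => y * u y) (Ioo 0 1))
    (hv : IntegrableOn (fun y => y * v y) (Ici 1)) :
    ∫ z : ℂ, (if ‖z‖ < 1 then u ‖z‖ else v ‖z‖) =
      2 * Real.pi * ((∫ y in Ioo 0 1, y * u y) + ∫ y in Ici 1, y * v y) := by
  have hinner : EqOn (fun y : ℝ => y * if y < 1 then u y else v y) (fun y => y * u y) (Ioo 0 1) :=
    fun y hy => by simp only [if_pos hy.2]
  have houter : EqOn (fun y : ℝ => y * if y < 1 then u y else v y) (fun y => y * v y) (Ici 1) :=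
    fun y hy => by simp only [if_neg (not_lt.2 (mem_Ici.1 hy))]
  rw [integral_fun_norm_complex (fun y => if y < 1 then u y else v y),
    ← Ioo_union_Ici_eq_Ioi zero_lt_one,
    setIntegral_union ((Iio_disjoint_Ici le_rfl).mono_left Ioo_subset_Iio_self) measurableSet_Ici
      (hu.congr_fun hinner.symm measurableSet_Ioo) (hv.congr_fun houter.symm measurableSet_Ici),
    setIntegral_congr_fun measurableSet_Ioo hinner,
    setIntegral_congr_fun measurableSet_Ici houter]

lemma self_mul_rpow_rpow {y : ℝ} (hy : 0 < y) (s p : ℝ) :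
    y * (y ^ s) ^ p = y ^ (s * p + 1) := by
  rw [← Real.rpow_mul hy.le, Real.rpow_add hy, Real.rpow_one, mul_comm]

lemma self_mul_const_mul_rpow_rpow {y c : ℝ} (hy : 0 < y) (hc : 0 ≤ c) (s p : ℝ) :
    y * (c * y ^ s) ^ p = c ^ p * y ^ (s * p + 1) := by
  rw [Real.mul_rpow hc (Real.rpow_nonneg hy.le _), mul_left_comm, self_mul_rpow_rpow hy]

lemma integrableOn_Ioo_zero_one_mul_const_mul_rpow {s p c : ℝ} (hc : 0 ≤ c) (hsp : -2 < s * p) :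
    IntegrableOn (fun y : ℝ => y * (c * y ^ s) ^ p) (Ioo 0 1) := by
  have hrpow : IntegrableOn (fun y : ℝ => c ^ p * y ^ (s * p + 1)) (Ioo 0 1) :=
    ((intervalIntegral.intervalIntegrable_rpow' (by linarith : -1 < s * p + 1)).1.mono_set
      Ioo_subset_Ioc_self).const_mul (c ^ p)
  exact hrpow.congr_fun (fun y hy => (self_mul_const_mul_rpow_rpow hy.1 hc s p).symm)
    measurableSet_Ioo

lemma integral_Ioo_zero_one_mul_const_mul_rpow {s p c : ℝ} (hc : 0 ≤ c) (hsp : -2 < s * p) :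
    ∫ y in Ioo (0 : ℝ) 1, y * (c * y ^ s) ^ p = c ^ p / (s * p + 2) := by
  rw [setIntegral_congr_fun measurableSet_Ioo
      fun y hy => self_mul_const_mul_rpow_rpow hy.1 hc s p,
    integral_const_mul, ← integral_Ioc_eq_integral_Ioo,
    ← intervalIntegral.integral_of_le zero_le_one,
    integral_rpow (Or.inl (by linarith)), Real.one_rpow,
    Real.zero_rpow (by linarith : s * p + 1 + 1 ≠ 0)]
  ring_nf

lemma integrableOn_Ici_one_mul_rpow_rpow {s p : ℝ} (hsp : s * p < -2) :
    IntegrableOn (fun y : ℝ => y * (y ^ s) ^ p) (Ici 1) := by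
  rw [integrableOn_Ici_iff_integrableOn_Ioi]
  exact (integrableOn_Ioi_rpow_of_lt (by linarith : s * p + 1 < -1) zero_lt_one).congr_fun
    (fun y hy => (self_mul_rpow_rpow (zero_lt_one.trans hy) s p).symm) measurableSet_Ioi

lemma integral_Ici_one_mul_rpow_rpow {s p : ℝ} (hsp : s * p < -2) :
    ∫ y in Ici (1 : ℝ), y * (y ^ s) ^ p = -1 / (s * p + 2) := by
  rw [integral_Ici_eq_integral_Ioi, setIntegral_congr_fun measurableSet_Ioi
      fun y (hy : (1 : ℝ) < y) => self_mul_rpow_rpow (zero_lt_one.trans hy) s p,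
    integral_Ioi_rpow_of_lt (by linarith) zero_lt_one, Real.one_rpow]
  ring_nf

lemma tendsto_one_sub_rpow_div_rpow_add_div {p : ℝ} (hp : 1 < p) :
    Tendsto (fun α => (1 - α) ^ p / (α ^ p + (1 - α * p) / (p - 1))) (𝓝 (1 / p))
      (𝓝 ((p - 1) ^ p)) := by
  have hp0 : 0 < p := zero_lt_one.trans hp
  have hden : (1 / p) ^ p + (1 - 1 / p * p) / (p - 1) = (1 / p) ^ p := by
    field_simp; ring
  have hcont :
      ContinuousAt (fun α => (1 - α) ^ p / (α ^ p + (1 - α * p) / (p - 1))) (1 / p) := by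
    refine ContinuousAt.div (by fun_prop (disch := positivity))
      (by fun_prop (disch := positivity)) ?_
    rw [hden]; positivity
  convert hcont.tendsto using 1
  rw [hden, ← Real.div_rpow (by rw [sub_nonneg, div_le_one hp0]; exact hp.le) (by positivity)]
  congr 1
  field_simp

/-- `|∂f_α|` for `f_α(z) = z|z|^{-2α}` on the unit disc and `1 / conj z` outside it. -/
noncomputable def wirtingerDerivNorm (α : ℝ) (z : ℂ) : ℝ :=
  if ‖z‖ < 1 then (1 - α) * ‖z‖ ^ (-2 * α) else 0

/-- `|∂̄f_α|` for the same `f_α`. -/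
noncomputable def wirtingerConjDerivNorm (α : ℝ) (z : ℂ) : ℝ :=
  if ‖z‖ < 1 then α * ‖z‖ ^ (-2 * α) else ‖z‖ ^ (-2 : ℝ)

lemma integral_wirtingerDerivNorm_rpow {p α : ℝ} (hp : 0 < p) (hα : α ≤ 1)
    (hαp : α * p < 1) :
    ∫ z : ℂ, wirtingerDerivNorm α z ^ p =
      2 * Real.pi * ((1 - α) ^ p / (-2 * α * p + 2)) := by
  have hα' : 0 ≤ 1 - α := by linarith
  simp only [wirtingerDerivNorm, apply_ite (· ^ p), Real.zero_rpow hp.ne']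
  rw [integral_ite_norm_lt_one_complex (u := fun y => ((1 - α) * y ^ (-2 * α)) ^ p)
      (v := fun _ => 0)
      (integrableOn_Ioo_zero_one_mul_const_mul_rpow hα' (by nlinarith)) (by simp),
    integral_Ioo_zero_one_mul_const_mul_rpow hα' (by nlinarith)]
  simp only [mul_zero, integral_zero, add_zero]

lemma integral_wirtingerConjDerivNorm_rpow {p α : ℝ} (hp : 1 < p) (hα : 0 ≤ α)
    (hαp : α * p < 1) :
    ∫ z : ℂ, wirtingerConjDerivNorm α z ^ p =
      2 * Real.pi * (α ^ p / (-2 * α * p + 2) + -1 / (-2 * p + 2)) := by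
  simp only [wirtingerConjDerivNorm, apply_ite (· ^ p)]
  rw [integral_ite_norm_lt_one_complex (u := fun y => (α * y ^ (-2 * α)) ^ p)
      (v := fun y => (y ^ (-2 : ℝ)) ^ p)
      (integrableOn_Ioo_zero_one_mul_const_mul_rpow hα (by nlinarith))
      (integrableOn_Ici_one_mul_rpow_rpow (by linarith)),
    integral_Ioo_zero_one_mul_const_mul_rpow hα (by nlinarith),
    integral_Ici_one_mul_rpow_rpow (by linarith)]

lemma integral_wirtingerDerivNorm_rpow_div {p α : ℝ} (hp : 1 < p) (hα : 0 < α)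
    (hαp : α * p < 1) :
    (∫ z : ℂ, wirtingerDerivNorm α z ^ p) / (∫ z : ℂ, wirtingerConjDerivNorm α z ^ p) =
      (1 - α) ^ p / (α ^ p + (1 - α * p) / (p - 1)) := by
  have hden : -2 * α * p + 2 ≠ 0 := by linarith
  have hconj : α ^ p / (-2 * α * p + 2) + -1 / (-2 * p + 2) =
      (α ^ p + (1 - α * p) / (p - 1)) / (-2 * α * p + 2) := by
    rw [eq_div_iff hden, add_mul, div_mul_cancel₀ _ hden, div_mul_eq_mul_div, add_right_inj,
      div_eq_div_iff (by linarith) (by linarith)]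
    ring
  rw [integral_wirtingerDerivNorm_rpow (by linarith) (by nlinarith) hαp,
    integral_wirtingerConjDerivNorm_rpow hp hα.le hαp, hconj, mul_div_assoc', mul_div_assoc',
    div_div_div_cancel_right₀ hden, mul_div_mul_left _ _ Real.two_pi_pos.ne']

/-- The ratio ∫|∂f_α|^p / ∫|∂̄f_α|^p tends to (p−1)^p as α → 1/p. -/
theorem stmt12 (p : ℝ) (hp : 1 < p) :
    Filter.Tendsto (fun α : ℝ =>
      (∫ z : ℂ, (if ‖z‖ < 1 then (1 - α) * ‖z‖ ^ (-2 * α) else 0) ^ p) /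
      (∫ z : ℂ, (if ‖z‖ < 1 then α * ‖z‖ ^ (-2 * α)
        else ‖z‖ ^ (-2 : ℝ)) ^ p))
      (nhdsWithin (1 / p) (Set.Ioo 0 (1 / p))) (nhds ((p - 1) ^ p)) := by
  show Tendsto (fun α => (∫ z : ℂ, wirtingerDerivNorm α z ^ p) /
    ∫ z : ℂ, wirtingerConjDerivNorm α z ^ p) _ _
  refine ((tendsto_one_sub_rpow_div_rpow_add_div hp).mono_left nhdsWithin_le_nhds).congr' ?_
  filter_upwards [self_mem_nhdsWithin] with α ⟨hα, hαp⟩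
  rw [lt_div_iff₀ (by linarith)] at hαp
  exact (integral_wirtingerDerivNorm_rpow_div hp hα hαp).symm
end

section
/- Let I₂ : [0,1] → [0,∞) be nondecreasing and let p > 2. Then ∫₀¹ ((p−1)r^{2p−4} − 1) I₂(r) r dr ≥ 0. -/
/-! The weight `w r = ((p - 1) r ^ (2p - 4) - 1) r` has zero mean on `[0, 1]` and changes sign
once, from negative to positive, at `r₀ = (p - 1) ^ (-1 / (2p - 4))`. Hence
`w r (I₂ r - I₂ r₀) ≥ 0` pointwise for nondecreasing `I₂`, and integrating gives
`∫ w I₂ ≥ I₂ r₀ ∫ w = 0`. -/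

open intervalIntegral Set

theorem integral_mul_nonneg_of_monotoneOn_of_sign_change {w f : ℝ → ℝ} {a b c : ℝ}
    (hab : a ≤ b) (hc : c ∈ Icc a b) (hw : ContinuousOn w (Icc a b))
    (hf : MonotoneOn f (Icc a b))
    (hw_neg : ∀ x ∈ Icc a b, x ≤ c → w x ≤ 0) (hw_pos : ∀ x ∈ Icc a b, c ≤ x → 0 ≤ w x)
    (hw_int : ∫ x in a..b, w x = 0) :
    0 ≤ ∫ x in a..b, w x * f x := by
  have hw' : ContinuousOn w (uIcc a b) := by rwa [uIcc_of_le hab]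
  have hwf : IntervalIntegrable (fun x => w x * f x) MeasureTheory.volume a b :=
    ((uIcc_of_le hab ▸ hf : MonotoneOn f (uIcc a b)).intervalIntegrable).continuousOn_mul hw'
  have hwc : IntervalIntegrable (fun x => w x * f c) MeasureTheory.volume a b :=
    (hw'.mul continuousOn_const).intervalIntegrable
  have hpt : ∀ x ∈ Icc a b, 0 ≤ w x * f x - w x * f c := by
    intro x hx
    rw [← mul_sub]
    rcases le_total x c with hxc | hcx
    · exact mul_nonneg_of_nonpos_of_nonpos (hw_neg x hx hxc) (sub_nonpos.2 (hf hx hc hxc))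
    · exact mul_nonneg (hw_pos x hx hcx) (sub_nonneg.2 (hf hc hx hcx))
  have hconst : ∫ x in a..b, w x * f c = 0 := by
    rw [integral_mul_const, hw_int, zero_mul]
  calc 0 ≤ ∫ x in a..b, (w x * f x - w x * f c) := integral_nonneg hab hpt
    _ = ∫ x in a..b, w x * f x := by
      rw [integral_sub hwf hwc, hconst, sub_zero]

theorem integral_weight_eq_zero {p : ℝ} (hp : 1 < p) :
    ∫ r in (0 : ℝ)..1, ((p - 1) * r ^ (2 * p - 4) - 1) * r = 0 := by
  have hexp : (-1 : ℝ) < 2 * p - 4 + 1 := by linarith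
  have hcongr : ∀ᵐ r : ℝ, r ∈ uIoc (0 : ℝ) 1 →
      ((p - 1) * r ^ (2 * p - 4) - 1) * r = (p - 1) * r ^ (2 * p - 4 + 1) - r := by
    refine Filter.Eventually.of_forall fun r hr => ?_
    rw [uIoc_of_le zero_le_one] at hr
    rw [Real.rpow_add_one hr.1.ne']
    ring
  rw [integral_congr_ae hcongr,
    integral_sub ((intervalIntegrable_rpow' hexp).const_mul _)
      intervalIntegrable_id,
    integral_const_mul, integral_rpow (Or.inl hexp), integral_id,
    Real.one_rpow, Real.zero_rpow (by linarith)]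
  have hp1 : p - 1 ≠ 0 := by linarith
  rw [show 2 * p - 4 + 1 + 1 = 2 * (p - 1) by ring]
  field_simp
  ring

section Weight

variable {p : ℝ}

theorem weight_root_rpow (hp : 2 < p) :
    (p - 1) * ((p - 1) ^ (-(2 * p - 4)⁻¹)) ^ (2 * p - 4) = 1 := by
  rw [← Real.rpow_mul (by linarith), neg_mul, inv_mul_cancel₀ (by linarith), Real.rpow_neg_one,
    mul_inv_cancel₀ (by linarith)]

theorem weight_root_mem_Icc (hp : 2 < p) :
    (p - 1) ^ (-(2 * p - 4)⁻¹) ∈ Icc (0 : ℝ) 1 :=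
  ⟨Real.rpow_nonneg (by linarith) _,
    Real.rpow_le_one_of_one_le_of_nonpos (by linarith) (neg_nonpos.2 (inv_nonneg.2 (by linarith)))⟩

theorem weight_nonpos_of_le_root (hp : 2 < p) {r : ℝ} (hr : 0 ≤ r)
    (hle : r ≤ (p - 1) ^ (-(2 * p - 4)⁻¹)) :
    ((p - 1) * r ^ (2 * p - 4) - 1) * r ≤ 0 := by
  have := Real.rpow_le_rpow hr hle (by linarith : (0 : ℝ) ≤ 2 * p - 4)
  have h := weight_root_rpow hp
  exact mul_nonpos_of_nonpos_of_nonneg (by nlinarith) hr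

theorem weight_nonneg_of_root_le (hp : 2 < p) {r : ℝ} (hr : 0 ≤ r)
    (hle : (p - 1) ^ (-(2 * p - 4)⁻¹) ≤ r) :
    0 ≤ ((p - 1) * r ^ (2 * p - 4) - 1) * r := by
  have := Real.rpow_le_rpow (weight_root_mem_Icc hp).1 hle (by linarith : (0 : ℝ) ≤ 2 * p - 4)
  have h := weight_root_rpow hp
  exact mul_nonneg (by nlinarith) hr

end Weight

theorem stmt17_general (p : ℝ) (hp : 2 < p) (I₂ : ℝ → ℝ)
    (hmono : MonotoneOn I₂ (Set.Icc 0 1)) :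
    0 ≤ ∫ r in (0 : ℝ)..1, ((p - 1) * r ^ (2 * p - 4) - 1) * I₂ r * r := by
  have hw : ContinuousOn (fun r : ℝ => ((p - 1) * r ^ (2 * p - 4) - 1) * r) (Icc 0 1) :=
    ((continuousOn_const.mul
      (continuousOn_id.rpow_const fun _ _ => Or.inr (by linarith))).sub continuousOn_const).mul
      continuousOn_id
  have h := integral_mul_nonneg_of_monotoneOn_of_sign_change zero_le_one
    (weight_root_mem_Icc hp) hw hmono
    (fun r hr hle => weight_nonpos_of_le_root hp hr.1 hle)
    (fun r hr hle => weight_nonneg_of_root_le hp hr.1 hle)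
    (integral_weight_eq_zero (by linarith))
  simpa only [mul_right_comm] using h

/-- Monotonicity lemma in the proof of Theorem 4 (case p > 2). -/
theorem stmt17 (p : ℝ) (hp : 2 < p) (I₂ : ℝ → ℝ)
    (hmono : MonotoneOn I₂ (Set.Icc 0 1))
    (hnn : ∀ r ∈ Set.Icc (0 : ℝ) 1, 0 ≤ I₂ r) :
    0 ≤ ∫ r in (0 : ℝ)..1, ((p - 1) * r ^ (2 * p - 4) - 1) * I₂ r * r :=
  stmt17_general p hp I₂ hmono
end
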